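/- arXiv:2209.11405 — 4 statements merged into one kernel-verified Lean document; each statement's English description precedes it below -/
import Mathlib

section
/- Let C₁ ⊆ F₂^{n₁} and C₂ ⊆ F₂^{n₂} be nonzero linear codes with minimum distances d₁ and d₂ respectively (and C₁ ≠ F₂^{n₁}, C₂ ≠ F₂^{n₂} are not needed; assume only C₁, C₂ ≠ 0). Then the minimum distance of the dual tensor code C₁ ⊗ F₂^{n₂} + F₂^{n₁} ⊗ C₂ is exactly min(d₁, d₂). -/
/-!
A codeword `c` of `C₁` tensored with a unit vector is a codeword of the same weight, so the
minimum is at most `min d₁ d₂`. Conversely, let `M ≠ 0` be a codeword. If every column of `M`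
lies in `C₁`, a nonzero column already has weight `≥ d₁`. Otherwise some column lies outside
`C₁`, so a functional `φ` vanishing on `C₁` is nonzero on it; applying `φ` to each column gives
a nonzero codeword of `C₂`, whose support is contained in the set of nonzero columns of `M`,
hence `M` has weight `≥ d₂`.
-/

open Matrix

/-- The dual tensor code `C₁ ⊗ F₂^{n₂} + F₂^{n₁} ⊗ C₂` as a submodule of
`F₂^{n₁ × n₂}`. -/
def dualTensorCode {n₁ n₂ : ℕ}
    (C₁ : Submodule (ZMod 2) (Fin n₁ → ZMod 2))
    (C₂ : Submodule (ZMod 2) (Fin n₂ → ZMod 2)) :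
    Submodule (ZMod 2) (Fin n₁ × Fin n₂ → ZMod 2) :=
  Submodule.span (ZMod 2)
    ({f | ∃ c ∈ C₁, ∃ v : Fin n₂ → ZMod 2, f = fun p => c p.1 * v p.2} ∪
     {f | ∃ c ∈ C₂, ∃ v : Fin n₁ → ZMod 2, f = fun p => v p.1 * c p.2})

/-- `d` is the minimum distance of a (nonzero) linear code `C`: the least
Hamming weight of a nonzero codeword. -/
def IsMinDist {ι : Type*} [Fintype ι]
    (C : Submodule (ZMod 2) (ι → ZMod 2)) (d : ℕ) : Prop :=
  IsLeast {w : ℕ | ∃ c ∈ C, c ≠ 0 ∧ hammingNorm c = w} d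

open Finset

section HammingNorm

variable {ι₁ ι₂ : Type*} [Fintype ι₁] [Fintype ι₂]

theorem hammingNorm_single_one {R : Type*} [Zero R] [One R] [NeZero (1 : R)] [DecidableEq R]
    [DecidableEq ι₂] (j : ι₂) : hammingNorm (Pi.single (M := fun _ => R) j 1) = 1 := by
  rw [hammingNorm, card_eq_one]
  exact ⟨j, by ext j'; by_cases h : j' = j <;> simp [h]⟩

theorem hammingNorm_mul_apply_fst_snd {R : Type*} [MulZeroClass R] [NoZeroDivisors R]
    [DecidableEq R] (u : ι₁ → R) (v : ι₂ → R) :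
    hammingNorm (fun p : ι₁ × ι₂ => u p.1 * v p.2) = hammingNorm u * hammingNorm v := by
  simp only [hammingNorm, ne_eq, mul_eq_zero, not_or, ← card_product, ← filter_product,
    univ_product_univ]

variable {β γ : Type*} [Zero β] [Zero γ] [DecidableEq β] [DecidableEq γ]

theorem hammingNorm_column_le (M : ι₁ × ι₂ → β) (j : ι₂) :
    hammingNorm (fun i => M (i, j)) ≤ hammingNorm M :=
  card_le_card_of_injOn (fun i => (i, j)) (fun i hi => by simpa using hi)
    fun _ _ _ _ h => congrArg Prod.fst h

theorem hammingNorm_le_of_ne_zero_column_ne_zero (M : ι₁ × ι₂ → β) (g : ι₂ → γ)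
    (h : ∀ j, g j ≠ 0 → (fun i => M (i, j)) ≠ 0) :
    hammingNorm g ≤ hammingNorm M := by
  classical
  calc hammingNorm g ≤ #(({p | M p ≠ 0} : Finset (ι₁ × ι₂)).image Prod.snd) := by
        refine card_le_card fun j hj => ?_
        obtain ⟨i, hi⟩ := Function.ne_iff.mp (h j (mem_filter.mp hj).2)
        exact mem_image.mpr ⟨(i, j), mem_filter.mpr ⟨mem_univ _, hi⟩, rfl⟩
    _ ≤ hammingNorm M := card_image_le

end HammingNorm

section Columns

variable {K ι₁ ι₂ : Type*} [CommSemiring K]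

def mapColumns (φ : (ι₁ → K) →ₗ[K] K) : (ι₁ × ι₂ → K) →ₗ[K] (ι₂ → K) :=
  LinearMap.pi fun j => φ ∘ₗ LinearMap.funLeft K K (fun i => (i, j))

@[simp]
theorem mapColumns_apply (φ : (ι₁ → K) →ₗ[K] K) (M : ι₁ × ι₂ → K) (j : ι₂) :
    mapColumns φ M j = φ (fun i => M (i, j)) :=
  rfl

theorem mapColumns_mul_apply_fst_snd (φ : (ι₁ → K) →ₗ[K] K) (u : ι₁ → K) (v : ι₂ → K) :
    mapColumns φ (fun p => u p.1 * v p.2) = φ u • v := by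
  ext j
  have hcol : (fun i => u i * v j) = v j • u := by ext; simp [mul_comm]
  simp [hcol, mul_comm]

end Columns

section DualTensorCode

variable {n₁ n₂ : ℕ} {C₁ : Submodule (ZMod 2) (Fin n₁ → ZMod 2)}
  {C₂ : Submodule (ZMod 2) (Fin n₂ → ZMod 2)}

theorem dualTensorCode_le_comap_mapColumns (φ : (Fin n₁ → ZMod 2) →ₗ[ZMod 2] ZMod 2)
    (hφ : C₁ ≤ LinearMap.ker φ) : dualTensorCode C₁ C₂ ≤ C₂.comap (mapColumns φ) := by
  rw [dualTensorCode, Submodule.span_le]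
  rintro _ (⟨c, hc, v, rfl⟩ | ⟨c, hc, v, rfl⟩) <;>
    simp only [SetLike.mem_coe, Submodule.mem_comap, mapColumns_mul_apply_fst_snd]
  · simp [LinearMap.mem_ker.mp (hφ hc)]
  · exact C₂.smul_mem _ hc

theorem exists_mem_dualTensorCode_hammingNorm_eq_left {c : Fin n₁ → ZMod 2} (hc : c ∈ C₁)
    (hc0 : c ≠ 0) (j : Fin n₂) :
    ∃ M ∈ dualTensorCode C₁ C₂, M ≠ 0 ∧ hammingNorm M = hammingNorm c := by
  have hw : hammingNorm (fun p : Fin n₁ × Fin n₂ => c p.1 * (Pi.single j 1 : Fin n₂ → ZMod 2) p.2)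
      = hammingNorm c := by
    rw [hammingNorm_mul_apply_fst_snd, hammingNorm_single_one, mul_one]
  exact ⟨_, Submodule.subset_span (Or.inl ⟨c, hc, _, rfl⟩),
    hammingNorm_ne_zero_iff.mp (hw ▸ hammingNorm_ne_zero_iff.mpr hc0), hw⟩

theorem exists_mem_dualTensorCode_hammingNorm_eq_right {c : Fin n₂ → ZMod 2} (hc : c ∈ C₂)
    (hc0 : c ≠ 0) (i : Fin n₁) :
    ∃ M ∈ dualTensorCode C₁ C₂, M ≠ 0 ∧ hammingNorm M = hammingNorm c := by
  have hw : hammingNorm (fun p : Fin n₁ × Fin n₂ => (Pi.single i 1 : Fin n₁ → ZMod 2) p.1 * c p.2)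
      = hammingNorm c := by
    rw [hammingNorm_mul_apply_fst_snd, hammingNorm_single_one, one_mul]
  exact ⟨_, Submodule.subset_span (Or.inr ⟨c, hc, _, rfl⟩),
    hammingNorm_ne_zero_iff.mp (hw ▸ hammingNorm_ne_zero_iff.mpr hc0), hw⟩

theorem min_le_hammingNorm_of_mem_dualTensorCode {d₁ d₂ : ℕ} (hd₁ : IsMinDist C₁ d₁)
    (hd₂ : IsMinDist C₂ d₂) {M : Fin n₁ × Fin n₂ → ZMod 2} (hM : M ∈ dualTensorCode C₁ C₂)
    (hM0 : M ≠ 0) : min d₁ d₂ ≤ hammingNorm M := by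
  by_cases hcols : ∀ j, (fun i => M (i, j)) ∈ C₁
  · obtain ⟨⟨i, j⟩, hij⟩ := Function.ne_iff.mp hM0
    have hcol : (fun i => M (i, j)) ≠ 0 := Function.ne_iff.mpr ⟨i, hij⟩
    exact (min_le_left _ _).trans
      ((hd₁.2 ⟨_, hcols j, hcol, rfl⟩).trans (hammingNorm_column_le M j))
  · push Not at hcols
    obtain ⟨j, hj⟩ := hcols
    obtain ⟨φ, hφj, hφC₁⟩ := Submodule.exists_dual_map_eq_bot_of_notMem hj inferInstance
    have hg : mapColumns φ M ∈ C₂ :=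
      dualTensorCode_le_comap_mapColumns φ (LinearMap.le_ker_iff_map.mpr hφC₁) hM
    have hg0 : mapColumns φ M ≠ 0 := Function.ne_iff.mpr ⟨j, hφj⟩
    refine (min_le_right _ _).trans ((hd₂.2 ⟨_, hg, hg0, rfl⟩).trans ?_)
    refine hammingNorm_le_of_ne_zero_column_ne_zero M _ fun j hj hcol => hj ?_
    simp [hcol]

end DualTensorCode

theorem stmt_7_general (n₁ n₂ d₁ d₂ : ℕ)
    (C₁ : Submodule (ZMod 2) (Fin n₁ → ZMod 2))
    (C₂ : Submodule (ZMod 2) (Fin n₂ → ZMod 2))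
    (hd₁ : IsMinDist C₁ d₁) (hd₂ : IsMinDist C₂ d₂) :
    IsMinDist (dualTensorCode C₁ C₂) (min d₁ d₂) := by
  refine ⟨?_, fun _ ⟨M, hM, hM0, hw⟩ =>
    hw ▸ min_le_hammingNorm_of_mem_dualTensorCode hd₁ hd₂ hM hM0⟩
  obtain ⟨c₁, hc₁, hc₁0, rfl⟩ := hd₁.1
  obtain ⟨c₂, hc₂, hc₂0, rfl⟩ := hd₂.1
  obtain ⟨i, -⟩ := Function.ne_iff.mp hc₁0
  obtain ⟨j, -⟩ := Function.ne_iff.mp hc₂0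
  rcases min_choice (hammingNorm c₁) (hammingNorm c₂) with h | h <;> rw [h]
  · exact exists_mem_dualTensorCode_hammingNorm_eq_left hc₁ hc₁0 j
  · exact exists_mem_dualTensorCode_hammingNorm_eq_right hc₂ hc₂0 i

/-- the minimum distance of the dual tensor code of nonzero codes
with minimum distances `d₁, d₂` is exactly `min d₁ d₂`. -/
theorem stmt_7 (n₁ n₂ d₁ d₂ : ℕ)
    (C₁ : Submodule (ZMod 2) (Fin n₁ → ZMod 2))
    (C₂ : Submodule (ZMod 2) (Fin n₂ → ZMod 2))
    (h₁ : C₁ ≠ ⊥) (h₂ : C₂ ≠ ⊥)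
    (hd₁ : IsMinDist C₁ d₁) (hd₂ : IsMinDist C₂ d₂) :
    IsMinDist (dualTensorCode C₁ C₂) (min d₁ d₂) :=
  stmt_7_general n₁ n₂ d₁ d₂ C₁ C₂ hd₁ hd₂
end

section
/- (Lower bound part of dual-tensor distance) If M is a nonzero element of C₁ ⊗ F₂^{n₂} + F₂^{n₁} ⊗ C₂, viewed as an n₁×n₂ matrix over F₂, then the number of nonzero entries of M is at least min(d₁, d₂), where d₁, d₂ are the minimum distances of C₁ and C₂. -/
/-! If every row of `M` lies in `C₂`, a nonzero row is a codeword of weight at least `d₂`.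
Otherwise some row lies outside `C₂`, and a parity check `φ` of `C₂` that is nonzero on that
row turns `M` into the nonzero vector `i ↦ φ (row i)`, which lies in `C₁` because `φ` kills the
`F₂^{n₁} ⊗ C₂` part and maps `C₁ ⊗ F₂^{n₂}` into `C₁`. Its weight, at least `d₁`, is bounded by
the number of nonzero rows of `M`. -/

open Matrix

open Finset Function

section RowWeights

variable {ι κ β : Type*} [Fintype ι] [Fintype κ] [Zero β] [DecidableEq β]

theorem hammingNorm_eq_sum_hammingNorm_curry (M : ι × κ → β) :
    hammingNorm M = ∑ i, hammingNorm (curry M i) := by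
  rw [hammingNorm, card_filter, Fintype.sum_prod_type]
  exact sum_congr rfl fun i _ => (card_filter _ _).symm

theorem hammingNorm_curry_apply_le (M : ι × κ → β) (i : ι) :
    hammingNorm (curry M i) ≤ hammingNorm M :=
  (hammingNorm_eq_sum_hammingNorm_curry M).symm ▸
    single_le_sum (f := fun i => hammingNorm (curry M i)) (fun _ _ => Nat.zero_le _) (mem_univ i)

theorem hammingNorm_curry_le (M : ι × κ → β) : hammingNorm (curry M) ≤ hammingNorm M := by
  rw [hammingNorm_eq_sum_hammingNorm_curry, hammingNorm, card_filter]
  refine sum_le_sum fun i _ => ?_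
  split_ifs with h
  · exact Nat.one_le_iff_ne_zero.mpr (hammingNorm_ne_zero_iff.mpr h)
  · exact Nat.zero_le _

end RowWeights

theorem comp_curry_mem_of_mem_dualTensorCode {n₁ n₂ : ℕ}
    {C₁ : Submodule (ZMod 2) (Fin n₁ → ZMod 2)} {C₂ : Submodule (ZMod 2) (Fin n₂ → ZMod 2)}
    {φ : (Fin n₂ → ZMod 2) →ₗ[ZMod 2] ZMod 2} (hφ : C₂ ≤ LinearMap.ker φ)
    {M : Fin n₁ × Fin n₂ → ZMod 2} (hM : M ∈ dualTensorCode C₁ C₂) :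
    (fun i => φ (curry M i)) ∈ C₁ := by
  let rowCheck := φ.compLeft (Fin n₁) ∘ₗ (LinearEquiv.curry (ZMod 2) (ZMod 2) _ _).toLinearMap
  suffices dualTensorCode C₁ C₂ ≤ C₁.comap rowCheck from this hM
  refine Submodule.span_le.mpr ?_
  rintro _ (⟨c, hc, v, rfl⟩ | ⟨c, hc, v, rfl⟩) <;> simp only [SetLike.mem_coe, Submodule.mem_comap]
  · convert C₁.smul_mem (φ v) hc using 1
    ext i
    show φ (c i • v) = φ v * c i
    rw [map_smul, smul_eq_mul, mul_comm]
  · convert C₁.zero_mem using 1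
    ext i
    show φ (v i • c) = 0
    rw [map_smul, hφ hc, smul_zero]

/-- lower bound on the dual-tensor distance: any nonzero element
of the dual tensor code has Hamming weight at least `min d₁ d₂`, where `d₁, d₂`
lower-bound the weights of nonzero codewords of `C₁, C₂`. -/
theorem stmt_8 (n₁ n₂ d₁ d₂ : ℕ)
    (C₁ : Submodule (ZMod 2) (Fin n₁ → ZMod 2))
    (C₂ : Submodule (ZMod 2) (Fin n₂ → ZMod 2))
    (hd₁ : ∀ c ∈ C₁, c ≠ 0 → d₁ ≤ hammingNorm c)
    (hd₂ : ∀ c ∈ C₂, c ≠ 0 → d₂ ≤ hammingNorm c) :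
    ∀ M ∈ dualTensorCode C₁ C₂, M ≠ 0 → min d₁ d₂ ≤ hammingNorm M := by
  intro M hM hM0
  by_cases hrows : ∀ i, curry M i ∈ C₂
  · obtain ⟨i, hi⟩ : ∃ i, curry M i ≠ 0 := by
      by_contra! h
      exact hM0 (funext fun p => congrFun (h p.1) p.2)
    calc min d₁ d₂ ≤ d₂ := min_le_right _ _
      _ ≤ hammingNorm (curry M i) := hd₂ _ (hrows i) hi
      _ ≤ hammingNorm M := hammingNorm_curry_apply_le M i
  · obtain ⟨i₀, hi₀⟩ := not_forall.mp hrows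
    obtain ⟨φ, hφi₀, hφ⟩ := C₂.exists_le_ker_of_notMem hi₀
    have hcol : (fun i => φ (curry M i)) ≠ 0 := fun h => hφi₀ (congrFun h i₀)
    calc min d₁ d₂ ≤ d₁ := min_le_left _ _
      _ ≤ hammingNorm fun i => φ (curry M i) :=
        hd₁ _ (comp_curry_mem_of_mem_dualTensorCode hφ hM) hcol
      _ ≤ hammingNorm (curry M) :=
        hammingNorm_comp_le_hammingNorm (fun _ => φ) fun _ => map_zero φ
      _ ≤ hammingNorm M := hammingNorm_curry_le M
end

section
/- (Soundness of check product with a systematic code) Let C = ker H ⊆ F₂ⁿ be locally testable with soundness ρ with respect to an m×n check matrix H (t := m checks), and let H_X = [I_{m_X} | h_X] be an m_X × n_X matrix over F₂ in systematic form with C_X = ker H_X. Then the code ker(H_X ⊗ H) ⊆ F₂^{n_X·n} is locally testable with soundness at least ρ·n_X/m_X with respect to the check matrix H_X ⊗ H: for every x ∈ F₂^{n_X n}, |(H_X ⊗ H)x|/(m_X·m) ≥ (ρ·n_X/m_X)·d(x, ker(H_X⊗H))/(n_X·n). -/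
/-!
The `i`-th block of checks of `H_X ⊗ H` is `H` applied to `yᵢ = xᵢ + Σₖ (h_X)ᵢₖ x_{m_X+k}`, so the
syndrome weight of `x` is `Σᵢ |H yᵢ|`, and soundness of `H` bounds it below by
`(ρ m / n) Σᵢ d(yᵢ, C)`. Since the identity block of `H_X` lets us change each `xᵢ` independently
while keeping the other coordinates, replacing `xᵢ` by `cᵢ - Σₖ (h_X)ᵢₖ x_{m_X+k}` with `cᵢ` a
nearest codeword to `yᵢ` gives a codeword of `ker (H_X ⊗ H)` at distance `Σᵢ d(yᵢ, C)` from `x`.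
-/

open Matrix

/-- Distance from a vector to the code `ker A`. -/
noncomputable def distToCode {ι κ : Type*} [Fintype ι] [Fintype κ]
    (A : Matrix κ ι (ZMod 2)) (x : ι → ZMod 2) : ℕ :=
  sInf {d : ℕ | ∃ c : ι → ZMod 2, A.mulVec c = 0 ∧ hammingDist x c = d}

section

variable {ι κ : Type*} [Fintype ι] [Fintype κ]

theorem exists_mulVec_eq_zero_hammingDist_eq_distToCode (A : Matrix κ ι (ZMod 2))
    (x : ι → ZMod 2) : ∃ c, A *ᵥ c = 0 ∧ hammingDist x c = distToCode A x :=
  Nat.sInf_mem (s := {d | ∃ c, A *ᵥ c = 0 ∧ hammingDist x c = d}) ⟨_, 0, mulVec_zero A, rfl⟩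

theorem distToCode_le_hammingDist {A : Matrix κ ι (ZMod 2)} (x : ι → ZMod 2)
    {c : ι → ZMod 2} (hc : A *ᵥ c = 0) : distToCode A x ≤ hammingDist x c :=
  Nat.sInf_le ⟨c, hc, rfl⟩

end

theorem hammingNorm_prod_eq_sum {α β R : Type*} [Fintype α] [Fintype β] [Zero R]
    [DecidableEq R] (w : α × β → R) :
    hammingNorm w = ∑ a, hammingNorm fun b => w (a, b) := by
  simp only [hammingNorm, Finset.card_filter, Fintype.sum_prod_type]

theorem kroneckerMap_mul_mulVec_apply {α β ι κ R : Type*} [Fintype α] [Fintype ι]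
    [CommSemiring R] (G : Matrix β α R) (H : Matrix κ ι R) (x : α × ι → R) (i : β) (r : κ) :
    (kroneckerMap (· * ·) G H *ᵥ x) (i, r) = (H *ᵥ fun j => (G *ᵥ fun a => x (a, j)) i) r := by
  simp only [mulVec, dotProduct, kroneckerMap_apply, Fintype.sum_prod_type, Finset.mul_sum]
  rw [Finset.sum_comm]
  exact Finset.sum_congr rfl fun _ _ => Finset.sum_congr rfl fun _ _ => by ring

theorem hammingNorm_kroneckerMap_mul_mulVec {α β ι κ R : Type*} [Fintype α] [Fintype β]
    [Fintype ι] [Fintype κ] [CommSemiring R] [DecidableEq R] (G : Matrix β α R)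
    (H : Matrix κ ι R) (x : α × ι → R) :
    hammingNorm (kroneckerMap (· * ·) G H *ᵥ x) =
      ∑ i, hammingNorm (H *ᵥ fun j => (G *ᵥ fun a => x (a, j)) i) := by
  rw [hammingNorm_prod_eq_sum]
  simp only [kroneckerMap_mul_mulVec_apply]

section Systematic

variable {α γ ι κ : Type*} [Fintype α] [Fintype γ] [Fintype ι] [Fintype κ] [DecidableEq α]
  (H : Matrix κ ι (ZMod 2)) (hX : Matrix α γ (ZMod 2))

theorem distToCode_kroneckerMap_fromCols_one_le (x : (α ⊕ γ) × ι → ZMod 2) :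
    distToCode (kroneckerMap (· * ·) (fromCols 1 hX) H) x ≤
      ∑ i, distToCode H fun j => (fromCols 1 hX *ᵥ fun a => x (a, j)) i := by
  set y : α → ι → ZMod 2 := fun i j => (fromCols 1 hX *ᵥ fun a => x (a, j)) i
  choose c hc hyc using fun i => exists_mulVec_eq_zero_hammingDist_eq_distToCode H (y i)
  let x' : (α ⊕ γ) × ι → ZMod 2 := fun p =>
    Sum.elim (fun i => c i p.2 - (hX *ᵥ fun k => x (Sum.inr k, p.2)) i)
      (fun k => x (Sum.inr k, p.2)) p.1
  have hx'_checks : ∀ i j, (fromCols 1 hX *ᵥ fun a => x' (a, j)) i = c i j := by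
    intro i j
    simp [x', fromCols_mulVec, Function.comp_def]
  have hx'_mem : kroneckerMap (· * ·) (fromCols 1 hX) H *ᵥ x' = 0 := by
    funext ⟨i, r⟩
    rw [kroneckerMap_mul_mulVec_apply]
    simp only [hx'_checks]
    exact congrFun (hc i) r
  have hx_inl : ∀ i j, -x (Sum.inl i, j) + x' (Sum.inl i, j) = -y i j + c i j := by
    intro i j
    simp only [x', y, fromCols_mulVec, one_mulVec, Pi.add_apply, Sum.elim_inl, Function.comp_def]
    ring
  calc distToCode (kroneckerMap (· * ·) (fromCols 1 hX) H) x
      ≤ hammingDist x x' := distToCode_le_hammingDist x hx'_mem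
    _ = ∑ i, hammingDist (y i) (c i) := by
      have hx_inr : ∀ k j, -x (Sum.inr k, j) + x' (Sum.inr k, j) = 0 := fun _ _ => neg_add_cancel _
      rw [hammingDist_eq_hammingNorm, hammingNorm_prod_eq_sum, Fintype.sum_sum_type]
      simp only [Pi.add_apply, Pi.neg_apply, hx_inl, hx_inr, ← Pi.zero_def, hammingNorm_zero,
        Finset.sum_const_zero, add_zero, hammingDist_eq_hammingNorm]
      rfl
    _ = ∑ i, distToCode H (y i) := Finset.sum_congr rfl fun i _ => hyc i

theorem kroneckerMap_fromCols_one_sound {m : ℕ} {c : ℝ}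
    (hsound : ∀ y, (hammingNorm (H *ᵥ y) : ℝ) / m ≥ c * distToCode H y)
    (x : (α ⊕ γ) × ι → ZMod 2) :
    (hammingNorm (kroneckerMap (· * ·) (fromCols 1 hX) H *ᵥ x) : ℝ) / m ≥
      c * distToCode (kroneckerMap (· * ·) (fromCols 1 hX) H) x := by
  set y : α → ι → ZMod 2 := fun i j => (fromCols 1 hX *ᵥ fun a => x (a, j)) i
  have hslices : c * ∑ i, (distToCode H (y i) : ℝ) ≤
      (hammingNorm (kroneckerMap (· * ·) (fromCols 1 hX) H *ᵥ x) : ℝ) / m := by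
    rw [hammingNorm_kroneckerMap_mul_mulVec, Nat.cast_sum, Finset.sum_div, Finset.mul_sum]
    exact Finset.sum_le_sum fun i _ => hsound (y i)
  rcases le_or_gt 0 c with hc | hc
  · refine le_trans ?_ hslices
    gcongr
    exact_mod_cast distToCode_kroneckerMap_fromCols_one_le H hX x
  · calc c * distToCode (kroneckerMap (· * ·) (fromCols 1 hX) H) x ≤ 0 :=
          mul_nonpos_of_nonpos_of_nonneg hc.le (Nat.cast_nonneg _)
      _ ≤ _ := by positivity

end Systematic

theorem stmt_11_general (m n mX kX : ℕ)
    (H : Matrix (Fin m) (Fin n) (ZMod 2))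
    (hX : Matrix (Fin mX) (Fin kX) (ZMod 2)) (ρ : ℝ)
    (hsound : ∀ x : Fin n → ZMod 2,
      (hammingNorm (H.mulVec x) : ℝ) / m ≥ ρ / n * (distToCode H x : ℝ)) :
    ∀ x : (Fin mX ⊕ Fin kX) × Fin n → ZMod 2,
      (hammingNorm ((Matrix.kroneckerMap (· * ·)
          (Matrix.fromCols (1 : Matrix (Fin mX) (Fin mX) (ZMod 2)) hX) H).mulVec x) : ℝ) /
            (mX * m) ≥
        (ρ * (mX + kX) / mX) *
          (distToCode (Matrix.kroneckerMap (· * ·)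
            (Matrix.fromCols (1 : Matrix (Fin mX) (Fin mX) (ZMod 2)) hX) H) x : ℝ) /
          ((mX + kX) * n) := by
  intro x
  set A := kroneckerMap (· * ·) (fromCols (1 : Matrix (Fin mX) (Fin mX) (ZMod 2)) hX) H
  have hrhs : ρ * (mX + kX) / mX * (distToCode A x : ℝ) / ((mX + kX) * n) =
      ρ / n * distToCode A x / mX := by
    rcases eq_or_ne ((mX : ℝ) + kX) 0 with hnX | hnX
    · have hmX : (mX : ℝ) = 0 := by
        linarith [(Nat.cast_nonneg mX : (0 : ℝ) ≤ mX), (Nat.cast_nonneg kX : (0 : ℝ) ≤ kX)]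
      simp [hmX]
    · generalize (mX : ℝ) + kX = nX at hnX ⊢
      calc ρ * nX / mX * (distToCode A x : ℝ) / (nX * n)
          = (nX / nX) * (ρ / n * distToCode A x / mX) := by ring
        _ = ρ / n * distToCode A x / mX := by rw [div_self hnX, one_mul]
  rw [hrhs, mul_comm (mX : ℝ), ← div_div]
  exact div_le_div_of_nonneg_right (kroneckerMap_fromCols_one_sound H hX hsound x) mX.cast_nonneg

/-- if `C = ker H` (an `m × n` check matrix) is locally testable
with soundness `ρ`, and `H_X = [I_{m_X} | h_X]` is a systematic `m_X × n_X`
check matrix (`n_X = m_X + k_X`), then `ker (H_X ⊗ H)` is locally testable with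
soundness at least `ρ·n_X/m_X`. -/
theorem stmt_11 (m n mX kX : ℕ) (hm : 0 < m) (hn : 0 < n) (hmX : 0 < mX)
    (H : Matrix (Fin m) (Fin n) (ZMod 2))
    (hX : Matrix (Fin mX) (Fin kX) (ZMod 2)) (ρ : ℝ)
    (hsound : ∀ x : Fin n → ZMod 2,
      (hammingNorm (H.mulVec x) : ℝ) / m ≥ ρ / n * (distToCode H x : ℝ)) :
    ∀ x : (Fin mX ⊕ Fin kX) × Fin n → ZMod 2,
      (hammingNorm ((Matrix.kroneckerMap (· * ·)
          (Matrix.fromCols (1 : Matrix (Fin mX) (Fin mX) (ZMod 2)) hX) H).mulVec x) : ℝ) /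
            (mX * m) ≥
        (ρ * (mX + kX) / mX) *
          (distToCode (Matrix.kroneckerMap (· * ·)
            (Matrix.fromCols (1 : Matrix (Fin mX) (Fin mX) (ZMod 2)) hX) H) x : ℝ) /
          ((mX + kX) * n) :=
  stmt_11_general m n mX kX H hX ρ hsound
end

section
/- Let Q = css(H_X, H_Z) be a CSS code on n_q qubits with C_X = ker H_X, C_Z = ker H_Z, and let C = ker H ⊆ F₂ⁿ with C^⊥ ≠ F₂ⁿ, C_Z^⊥ ≠ F₂^{n_q}, C_X^⊥ ≠ F₂^{n_q}. Then the X-distance of the check product code Q ⋆ C = css(H_X ⊗ H, H_Z ⊗ H) satisfies d_x(Q⋆C) = min(d(C_X), d(C)), where d_x(Q⋆C) = min{|w| : w ∈ (C_X ⋆ C) \ (C_Z ⋆ C)^⊥} and C_X ⋆ C = ker(H_X ⊗ H) = C_X ⊗ F₂ⁿ + F₂^{n_q} ⊗ C. -/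
/-!
Upper bound: if `x ∈ ker H_X` has minimum weight and some `c ∈ ker H` has `cᵢ ≠ 0`, then `x ⊗ eᵢ`
lies in `ker (H_X ⊗ H)` and pairs with `e_k ⊗ c ∈ ker (H_Z ⊗ H)` to `x_k cᵢ ≠ 0` for any `k` in
the support of `x`; symmetrically `e_j ⊗ y` for `y ∈ ker H` of minimum weight, against
`z ⊗ eᵢ` with `z ∈ ker H_Z`.

Lower bound: let `0 ≠ v ∈ ker (H_X ⊗ H)`. If every row `v(i, ·)` lies in `ker H`, a nonzero row
has weight at least `d(C)`. Otherwise some check `s` of `H` is violated by a row, and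
`i ↦ (H v(i, ·))ₛ` is a nonzero codeword of `ker H_X` supported on the nonzero rows of `v`.
-/

open Matrix Finset

/-- The dual of a set of vectors in `F₂^ι` under the standard bilinear form. -/
def dualOf {ι : Type*} [Fintype ι] (S : Set (ι → ZMod 2)) : Set (ι → ZMod 2) :=
  {u | ∀ v ∈ S, ∑ i, u i * v i = 0}

open scoped Kronecker

section Kronecker

variable {R α β m n : Type*}

def kroneckerVec [Mul R] (a : α → R) (b : β → R) : α × β → R := fun p => a p.1 * b p.2

@[simp]
theorem kroneckerVec_apply [Mul R] (a : α → R) (b : β → R) (p : α × β) :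
    kroneckerVec a b p = a p.1 * b p.2 := rfl

@[simp]
theorem kroneckerVec_zero_left [MulZeroClass R] (b : β → R) :
    kroneckerVec (0 : α → R) b = 0 := by
  ext; simp

@[simp]
theorem kroneckerVec_zero_right [MulZeroClass R] (a : α → R) :
    kroneckerVec a (0 : β → R) = 0 := by
  ext; simp

theorem kroneckerMap_mulVec_kroneckerVec [CommSemiring R] [Fintype α] [Fintype β]
    (A : Matrix m α R) (B : Matrix n β R) (a : α → R) (b : β → R) :
    (A ⊗ₖ B) *ᵥ kroneckerVec a b = kroneckerVec (A *ᵥ a) (B *ᵥ b) := by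
  ext ⟨r, s⟩
  simp only [mulVec, dotProduct, Fintype.sum_prod_type, kroneckerMap_apply, kroneckerVec_apply,
    sum_mul_sum]
  exact sum_congr rfl fun i _ => sum_congr rfl fun j _ => by ring

theorem kroneckerVec_dotProduct_kroneckerVec [CommSemiring R] [Fintype α] [Fintype β]
    (a a' : α → R) (b b' : β → R) :
    kroneckerVec a b ⬝ᵥ kroneckerVec a' b' = (a ⬝ᵥ a') * (b ⬝ᵥ b') := by
  simp only [dotProduct, Fintype.sum_prod_type, kroneckerVec_apply, sum_mul_sum]
  exact sum_congr rfl fun i _ => sum_congr rfl fun j _ => by ring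

theorem kroneckerMap_mulVec_apply [CommSemiring R] [Fintype α] [Fintype β] (A : Matrix m α R)
    (B : Matrix n β R) (v : α × β → R) (r : m) (s : n) :
    ((A ⊗ₖ B) *ᵥ v) (r, s) = (A *ᵥ fun i => (B *ᵥ fun j => v (i, j)) s) r := by
  simp only [mulVec, dotProduct, Fintype.sum_prod_type, kroneckerMap_apply, mul_sum]
  exact sum_congr rfl fun i _ => sum_congr rfl fun j _ => by ring

end Kronecker

section HammingNorm

variable {R α β : Type*} [Fintype α] [Fintype β] [DecidableEq R]

theorem hammingNorm_kroneckerVec [MulZeroClass R] [NoZeroDivisors R] (a : α → R) (b : β → R) :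
    hammingNorm (kroneckerVec a b) = hammingNorm a * hammingNorm b := by
  classical
  simp only [hammingNorm, ← card_product]
  congr 1
  ext p
  simp

theorem hammingNorm_single [Zero R] [DecidableEq α] (i : α) {x : R} (hx : x ≠ 0) :
    hammingNorm (Pi.single i x : α → R) = 1 := by
  rw [hammingNorm, card_eq_one]
  exact ⟨i, by ext j; by_cases h : j = i <;> simp [h, hx]⟩

theorem hammingNorm_row_le [Zero R] (v : α × β → R) (i : α) :
    hammingNorm (fun j => v (i, j)) ≤ hammingNorm v :=
  card_le_card_of_injOn (fun j => (i, j)) (by intro j; simp)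
    (fun _ _ _ _ h => congrArg Prod.snd h)

theorem hammingNorm_le_of_apply_ne_zero [Zero R] {u : α → R} {v : α × β → R}
    (h : ∀ i, u i ≠ 0 → ∃ j, v (i, j) ≠ 0) : hammingNorm u ≤ hammingNorm v := by
  classical
  calc hammingNorm u ≤ ((univ.filter fun p => v p ≠ 0).image Prod.fst).card := by
        refine card_le_card fun i hi => ?_
        obtain ⟨j, hj⟩ := h i (mem_filter.mp hi).2
        exact mem_image.mpr ⟨(i, j), by simpa using hj, rfl⟩
    _ ≤ hammingNorm v := card_image_le

end HammingNorm

section Codes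

variable {R α β m m' n : Type*} [Fintype α] [Fintype β]

theorem min_le_hammingNorm_of_kroneckerMap_mulVec_eq_zero [CommSemiring R] [DecidableEq R]
    {A : Matrix m α R} {B : Matrix n β R} {dA dB : ℕ}
    (hA : dA ∈ lowerBounds {w | ∃ c, A *ᵥ c = 0 ∧ c ≠ 0 ∧ hammingNorm c = w})
    (hB : dB ∈ lowerBounds {w | ∃ c, B *ᵥ c = 0 ∧ c ≠ 0 ∧ hammingNorm c = w})
    {v : α × β → R} (hv : (A ⊗ₖ B) *ᵥ v = 0) (hv0 : v ≠ 0) : min dA dB ≤ hammingNorm v := by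
  by_cases hrows : ∀ i, B *ᵥ (fun j => v (i, j)) = 0
  · obtain ⟨⟨i, j⟩, hij⟩ := Function.ne_iff.mp hv0
    have hrow : (fun j => v (i, j)) ≠ 0 := fun h => hij (congrFun h j)
    calc min dA dB ≤ dB := min_le_right _ _
      _ ≤ hammingNorm fun j => v (i, j) := hB ⟨_, hrows i, hrow, rfl⟩
      _ ≤ hammingNorm v := hammingNorm_row_le v i
  · obtain ⟨i₀, hi₀⟩ := not_forall.mp hrows
    obtain ⟨s, hs⟩ := Function.ne_iff.mp hi₀
    set u : α → R := fun i => (B *ᵥ fun j => v (i, j)) s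
    have hAu : A *ᵥ u = 0 := by
      ext r
      rw [← kroneckerMap_mulVec_apply, hv, Pi.zero_apply, Pi.zero_apply]
    have hu0 : u ≠ 0 := fun h => hs (congrFun h i₀)
    have hsupp : ∀ i, u i ≠ 0 → ∃ j, v (i, j) ≠ 0 := by
      intro i hi
      by_contra! hrow
      exact hi (by simp [u, show (fun j => v (i, j)) = 0 from funext hrow])
    calc min dA dB ≤ dA := min_le_left _ _
      _ ≤ hammingNorm u := hA ⟨u, hAu, hu0, rfl⟩
      _ ≤ hammingNorm v := hammingNorm_le_of_apply_ne_zero hsupp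

theorem zero_mem_dualOf (S : Set (α → ZMod 2)) : 0 ∈ dualOf S := by
  intro v _
  simp

theorem exists_apply_ne_zero_of_dualOf_ne_univ {S : Set (α → ZMod 2)}
    (hS : dualOf S ≠ Set.univ) :
    ∃ c ∈ S, ∃ i, c i ≠ 0 := by
  by_contra! h
  refine hS (Set.eq_univ_of_forall fun u v hv => sum_eq_zero fun i _ => ?_)
  rw [h v hv i, mul_zero]

theorem kroneckerVec_notMem_dualOf {S : Set (α × β → ZMod 2)} {a a' : α → ZMod 2}
    {b b' : β → ZMod 2} (h : kroneckerVec a' b' ∈ S) (hab : (a ⬝ᵥ a') * (b ⬝ᵥ b') ≠ 0) :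
    kroneckerVec a b ∉ dualOf S :=
  fun hdual => hab (by rw [← kroneckerVec_dotProduct_kroneckerVec]; exact hdual _ h)

variable [DecidableEq α] [DecidableEq β] (A : Matrix m α (ZMod 2)) (A' : Matrix m' α (ZMod 2))
  (B : Matrix n β (ZMod 2))

theorem exists_logical_of_mulVec_eq_zero_left {x : α → ZMod 2} (hx : A *ᵥ x = 0) (hx0 : x ≠ 0)
    (hB : dualOf {c | B *ᵥ c = 0} ≠ Set.univ) :
    ∃ v, (A ⊗ₖ B) *ᵥ v = 0 ∧ v ∉ dualOf {u | (A' ⊗ₖ B) *ᵥ u = 0} ∧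
      hammingNorm v = hammingNorm x := by
  obtain ⟨c, hc : B *ᵥ c = 0, i, hci⟩ := exists_apply_ne_zero_of_dualOf_ne_univ hB
  obtain ⟨k, hk⟩ := Function.ne_iff.mp hx0
  refine ⟨kroneckerVec x (Pi.single i 1), ?_,
    kroneckerVec_notMem_dualOf (a' := Pi.single k 1) (b' := c) ?_ ?_, ?_⟩
  · simp [kroneckerMap_mulVec_kroneckerVec, hx]
  · simp [kroneckerMap_mulVec_kroneckerVec, hc]
  · simpa [dotProduct_single, single_dotProduct] using ⟨hk, hci⟩
  · rw [hammingNorm_kroneckerVec, hammingNorm_single i one_ne_zero, mul_one]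

theorem exists_logical_of_mulVec_eq_zero_right {y : β → ZMod 2} (hy : B *ᵥ y = 0) (hy0 : y ≠ 0)
    (hA' : dualOf {c | A' *ᵥ c = 0} ≠ Set.univ) :
    ∃ v, (A ⊗ₖ B) *ᵥ v = 0 ∧ v ∉ dualOf {u | (A' ⊗ₖ B) *ᵥ u = 0} ∧
      hammingNorm v = hammingNorm y := by
  obtain ⟨z, hz : A' *ᵥ z = 0, j, hzj⟩ := exists_apply_ne_zero_of_dualOf_ne_univ hA'
  obtain ⟨i, hi⟩ := Function.ne_iff.mp hy0
  refine ⟨kroneckerVec (Pi.single j 1) y, ?_,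
    kroneckerVec_notMem_dualOf (a' := z) (b' := Pi.single i 1) ?_ ?_, ?_⟩
  · simp [kroneckerMap_mulVec_kroneckerVec, hy]
  · simp [kroneckerMap_mulVec_kroneckerVec, hz]
  · simpa [dotProduct_single, single_dotProduct] using ⟨hzj, hi⟩
  · rw [hammingNorm_kroneckerVec, hammingNorm_single j one_ne_zero, one_mul]

end Codes

theorem stmt_19_general (nq mX mZ n mH dX dC : ℕ)
    (HX : Matrix (Fin mX) (Fin nq) (ZMod 2))
    (HZ : Matrix (Fin mZ) (Fin nq) (ZMod 2))
    (H : Matrix (Fin mH) (Fin n) (ZMod 2))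
    (hC : dualOf {c : Fin n → ZMod 2 | H.mulVec c = 0} ≠ Set.univ)
    (hCZ : dualOf {c : Fin nq → ZMod 2 | HZ.mulVec c = 0} ≠ Set.univ)
    (hdX : IsLeast {w : ℕ | ∃ c : Fin nq → ZMod 2,
        HX.mulVec c = 0 ∧ c ≠ 0 ∧ hammingNorm c = w} dX)
    (hdC : IsLeast {w : ℕ | ∃ c : Fin n → ZMod 2,
        H.mulVec c = 0 ∧ c ≠ 0 ∧ hammingNorm c = w} dC) :
    IsLeast {w : ℕ | ∃ v : Fin nq × Fin n → ZMod 2,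
        (Matrix.kroneckerMap (· * ·) HX H).mulVec v = 0 ∧
        v ∉ dualOf {u : Fin nq × Fin n → ZMod 2 |
          (Matrix.kroneckerMap (· * ·) HZ H).mulVec u = 0} ∧
        hammingNorm v = w} (min dX dC) := by
  refine ⟨?_, ?_⟩
  · obtain ⟨x, hx, hx0, rfl⟩ := hdX.1
    obtain ⟨y, hy, hy0, rfl⟩ := hdC.1
    rcases le_total (hammingNorm x) (hammingNorm y) with hle | hle
    · rw [min_eq_left hle]
      exact exists_logical_of_mulVec_eq_zero_left HX HZ H hx hx0 hC
    · rw [min_eq_right hle]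
      exact exists_logical_of_mulVec_eq_zero_right HX HZ H hy hy0 hCZ
  · rintro w ⟨v, hv, hvd, rfl⟩
    have hv0 : v ≠ 0 := by
      rintro rfl
      exact hvd (zero_mem_dualOf _)
    exact min_le_hammingNorm_of_kroneckerMap_mulVec_eq_zero hdX.2 hdC.2 hv hv0

/-- X-distance of the check product code
`Q ⋆ C = css(H_X ⊗ H, H_Z ⊗ H)`. Assuming `H_X H_Zᵀ = 0`, `C^⊥ ≠ F₂ⁿ`,
`C_Z^⊥ ≠ F₂^{n_q}`, `C_X^⊥ ≠ F₂^{n_q}`, and `d(C_X) = dX`, `d(C) = dC` are the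
minimum distances of `C_X = ker H_X` and `C = ker H`, the X-distance
`min{|w| : w ∈ ker(H_X ⊗ H) \ (ker(H_Z ⊗ H))^⊥}` equals `min dX dC`. -/
theorem stmt_19 (nq mX mZ n mH dX dC : ℕ)
    (HX : Matrix (Fin mX) (Fin nq) (ZMod 2))
    (HZ : Matrix (Fin mZ) (Fin nq) (ZMod 2))
    (H : Matrix (Fin mH) (Fin n) (ZMod 2))
    (hcss : HX * HZᵀ = 0)
    (hC : dualOf {c : Fin n → ZMod 2 | H.mulVec c = 0} ≠ Set.univ)
    (hCZ : dualOf {c : Fin nq → ZMod 2 | HZ.mulVec c = 0} ≠ Set.univ)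
    (hCX : dualOf {c : Fin nq → ZMod 2 | HX.mulVec c = 0} ≠ Set.univ)
    (hdX : IsLeast {w : ℕ | ∃ c : Fin nq → ZMod 2,
        HX.mulVec c = 0 ∧ c ≠ 0 ∧ hammingNorm c = w} dX)
    (hdC : IsLeast {w : ℕ | ∃ c : Fin n → ZMod 2,
        H.mulVec c = 0 ∧ c ≠ 0 ∧ hammingNorm c = w} dC) :
    IsLeast {w : ℕ | ∃ v : Fin nq × Fin n → ZMod 2,
        (Matrix.kroneckerMap (· * ·) HX H).mulVec v = 0 ∧
        v ∉ dualOf {u : Fin nq × Fin n → ZMod 2 |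
          (Matrix.kroneckerMap (· * ·) HZ H).mulVec u = 0} ∧
        hammingNorm v = w} (min dX dC) :=
  stmt_19_general nq mX mZ n mH dX dC HX HZ H hC hCZ hdX hdC
end
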